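/- Let u : ℝ → ℝ² be C¹ and 2π-periodic with ∫_{−π}^{π} u(t) dt = 0. Then ∫_{−π}^{π} |u(t)|² dt ≤ ∫_{−π}^{π} |u'(t)|² dt. Moreover, equality holds if and only if there exist constant vectors c₁, c₂ ∈ ℝ² such that u(t) = c₁ cos t + c₂ sin t for all t. -/

import Mathlib

/-!
Complexify: `f = u₀ + i u₁ : ℝ → ℂ` has Fourier coefficients `cₙ` on `[-π, π]` with `c₀ = 0`
(null average), and those of `f'` are `i n cₙ` (periodicity kills the boundary term of the
integration by parts). By Parseval, `∫ |f'|² - ∫ |f|² = 2π ∑ (n² - 1) |cₙ|²`, a sum of nonnegative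
terms, which vanishes only if `cₙ = 0` for `|n| ≥ 2`; then `f = c₁ e^{it} + c₋₁ e^{-it}`.
Conversely, for `u = cos • c₁ + sin • c₂` the derivative `u'` is a quarter-period shift of `u`,
so `|u|²` and `|u'|²` have the same integral over a period.
-/

open Real Set MeasureTheory

/-- Squared Euclidean norm of a vector in `ℝ²`. -/
noncomputable def sq2 (v : Fin 2 → ℝ) : ℝ := v 0 ^ 2 + v 1 ^ 2

open Complex (I)
open intervalIntegral Function
open scoped Interval

section FourierCoeffOn

variable {a b : ℝ} (hab : a < b)

theorem fourierCoeffOn_zero {E : Type*} [NormedAddCommGroup E] [NormedSpace ℂ E] (f : ℝ → E) :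
    fourierCoeffOn hab f 0 = (1 / (b - a)) • ∫ x in a..b, f x := by
  simp [fourierCoeffOn_eq_integral]

theorem fourierCoeffOn_deriv {f f' : ℝ → ℂ} (hf : ∀ x ∈ [[a, b]], HasDerivAt f (f' x) x)
    (hf' : IntervalIntegrable f' volume a b) (hfab : f b = f a) (n : ℤ) :
    fourierCoeffOn hab f' n = 2 * π * I * n / (b - a) * fourierCoeffOn hab f n := by
  rcases eq_or_ne n 0 with rfl | hn
  · simp [fourierCoeffOn_zero, integral_eq_sub_of_hasDerivAt hf hf', hfab]
  · have hba : (b - a : ℂ) ≠ 0 := sub_ne_zero.2 (Complex.ofReal_injective.ne hab.ne')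
    rw [fourierCoeffOn_of_hasDerivAt hab hn hf hf', hfab, sub_self, mul_zero, zero_sub]
    field_simp

theorem hasSum_sq_fourierCoeffOn_of_continuous {f : ℝ → ℂ} (hf : Continuous f) :
    HasSum (fun n => ‖fourierCoeffOn hab f n‖ ^ 2) ((b - a)⁻¹ • ∫ x in a..b, ‖f x‖ ^ 2) :=
  hasSum_sq_fourierCoeffOn hab <| (memLp_two_iff_integrable_sq_norm hf.aestronglyMeasurable).2
    (hf.norm.pow 2).integrableOn_Ioc

theorem Function.Periodic.eq_sum_fourierCoeffOn_smul_fourier {f : ℝ → ℂ}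
    (hper : Periodic f (b - a)) (hf : Continuous f) {s : Finset ℤ}
    (hs : ∀ n ∉ s, fourierCoeffOn hab f n = 0) (t : ℝ) :
    f t = ∑ n ∈ s, fourierCoeffOn hab f n • fourier n (t : AddCircle (b - a)) := by
  have : Fact (0 < b - a) := ⟨sub_pos.2 hab⟩
  let F : C(AddCircle (b - a), ℂ) := ⟨hper.lift, continuous_coinduced_dom.mpr hf⟩
  have hF : fourierCoeff F = fourierCoeffOn hab f := by
    ext n
    rw [fourierCoeff_eq_intervalIntegral _ _ a, fourierCoeffOn_eq_integral, add_sub_cancel]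
    rfl
  rw [← hF] at hs ⊢
  exact (has_pointwise_sum_fourier_series_of_summable (summable_of_ne_finset_zero hs) t).unique
    (hasSum_sum_of_ne_finset_zero fun n hn => by rw [hs n hn, zero_smul])

end FourierCoeffOn

theorem fourier_coe_apply_pi (n : ℤ) (t : ℝ) :
    fourier n (t : AddCircle (π - -π)) = Complex.exp (n * t * I) := by
  rw [fourier_coe_apply]
  congr 1
  have : (π : ℂ) ≠ 0 := Complex.ofReal_ne_zero.2 pi_ne_zero
  push_cast
  field_simp
  ring

theorem le_intCast_sq_mul {x : ℤ → ℝ} (hx : 0 ≤ x) (hx0 : x 0 = 0) (n : ℤ) :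
    x n ≤ (n : ℝ) ^ 2 * x n := by
  rcases eq_or_ne n 0 with rfl | hn
  · simp [hx0]
  · refine le_mul_of_one_le_left (hx n) ?_
    have : (1 : ℤ) ≤ n ^ 2 := by nlinarith [Int.one_le_abs hn, sq_abs n]
    exact_mod_cast this

theorem eq_zero_of_hasSum_sq_mul {x : ℤ → ℝ} {A : ℝ} (hx : 0 ≤ x) (hx0 : x 0 = 0)
    (hA : HasSum x A) (hB : HasSum (fun n : ℤ => (n : ℝ) ^ 2 * x n) A) {n : ℤ} (hn₁ : n ≠ 1)
    (hn₂ : n ≠ -1) : x n = 0 := by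
  by_contra hn
  have hn0 : n ≠ 0 := by rintro rfl; exact hn hx0
  have h4 : (4 : ℝ) ≤ (n : ℝ) ^ 2 := by
    have : (4 : ℤ) ≤ n ^ 2 := by
      rcases (by omega : 2 ≤ n ∨ n ≤ -2) with h | h <;> nlinarith
    exact_mod_cast this
  have hpos : 0 < x n := (hx n).lt_of_ne' hn
  exact (hasSum_lt (le_intCast_sq_mul hx hx0) (by nlinarith) hA hB).false

theorem integral_comp_deriv_cos_smul_add_sin_smul {E : Type*} [NormedAddCommGroup E]
    [NormedSpace ℝ E] (c₁ c₂ : E) (g : E → ℝ) :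
    ∫ t in (-π)..π, g (deriv (fun s => cos s • c₁ + sin s • c₂) t) =
      ∫ t in (-π)..π, g (cos t • c₁ + sin t • c₂) := by
  set u : ℝ → E := fun s => cos s • c₁ + sin s • c₂
  have hderiv : ∀ t, deriv u t = u (t + π / 2) := fun t => by
    have : HasDerivAt u (-sin t • c₁ + cos t • c₂) t :=
      ((hasDerivAt_cos t).smul_const c₁).add ((hasDerivAt_sin t).smul_const c₂)
    simp [this.deriv, u, cos_add_pi_div_two, sin_add_pi_div_two]
  have hper : Periodic (g ∘ u) (2 * π) := fun t => by simp [u, cos_periodic t, sin_periodic t]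
  have hshift := hper.intervalIntegral_add_eq (-π + π / 2) (-π)
  rw [show -π + π / 2 + 2 * π = π + π / 2 by ring, show -π + 2 * π = π by ring] at hshift
  simp_rw [hderiv]
  rw [integral_comp_add_right (fun t => g (u t))]
  exact hshift

theorem wirtinger_inequality_complex {f : ℝ → ℂ} (hf : ContDiff ℝ 1 f)
    (hper : Periodic f (2 * π)) (havg : ∫ t in (-π)..π, f t = 0) :
    (∫ t in (-π)..π, ‖f t‖ ^ 2) ≤ ∫ t in (-π)..π, ‖deriv f t‖ ^ 2 ∧
    ((∫ t in (-π)..π, ‖f t‖ ^ 2) = ∫ t in (-π)..π, ‖deriv f t‖ ^ 2 →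
      ∃ c₁ c₂ : ℂ, ∀ t, f t = cos t • c₁ + sin t • c₂) := by
  have hπ : -π < π := by linarith [pi_pos]
  have hper' : Periodic f (π - -π) := by rwa [sub_neg_eq_add, ← two_mul]
  set c := fourierCoeffOn hπ f
  have hc0 : c 0 = 0 := by simp [c, fourierCoeffOn_zero, havg]
  have hc' : ∀ n, ‖fourierCoeffOn hπ (deriv f) n‖ ^ 2 = (n : ℝ) ^ 2 * ‖c n‖ ^ 2 := fun n => by
    rw [fourierCoeffOn_deriv hπ (fun x _ => (hf.differentiable one_ne_zero x).hasDerivAt)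
      ((hf.continuous_deriv le_rfl).intervalIntegrable _ _) (by simpa using hper' (-π)) n]
    have hI : 2 * π * I * n / (π - (-π : ℝ)) = I * n := by
      push_cast
      field_simp
      ring
    rw [hI, norm_mul, norm_mul, Complex.norm_I, Complex.norm_intCast, one_mul, mul_pow, sq_abs]
  have hA := hasSum_sq_fourierCoeffOn_of_continuous hπ hf.continuous
  have hB := hasSum_sq_fourierCoeffOn_of_continuous hπ (hf.continuous_deriv le_rfl)
  simp_rw [hc'] at hB
  have hx : 0 ≤ fun n => ‖c n‖ ^ 2 := fun n => by positivity
  have hx0 : ‖c 0‖ ^ 2 = 0 := by simp [hc0]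
  refine ⟨?_, fun heq => ?_⟩
  · exact (smul_le_smul_iff_of_pos_left (by simpa using hπ)).1
      (hasSum_le (le_intCast_sq_mul hx hx0) hA hB)
  · rw [heq] at hA
    have hvan : ∀ n ∉ ({1, -1} : Finset ℤ), c n = 0 := fun n hn => by
      simp only [Finset.mem_insert, Finset.mem_singleton, not_or] at hn
      simpa using eq_zero_of_hasSum_sq_mul hx hx0 hA hB hn.1 hn.2
    refine ⟨c 1 + c (-1), I * (c 1 - c (-1)), fun t => ?_⟩
    rw [hper'.eq_sum_fourierCoeffOn_smul_fourier hπ hf.continuous hvan t,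
      Finset.sum_pair (by decide), fourier_coe_apply_pi, fourier_coe_apply_pi]
    simp only [Int.cast_one, Int.cast_neg, one_mul, neg_one_mul, ← Complex.ofReal_neg,
      Complex.exp_mul_I, ← Complex.ofReal_cos, ← Complex.ofReal_sin, cos_neg, sin_neg,
      Complex.real_smul]
    push_cast
    ring

noncomputable def finTwoEquivComplex : (Fin 2 → ℝ) ≃L[ℝ] ℂ :=
  (ContinuousLinearEquiv.finTwoArrow ℝ ℝ).trans Complex.equivRealProdCLM.symm

theorem sq2_eq_norm_finTwoEquivComplex_sq (v : Fin 2 → ℝ) :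
    sq2 v = ‖finTwoEquivComplex v‖ ^ 2 := by
  rw [Complex.sq_norm, show finTwoEquivComplex v = ⟨v 0, v 1⟩ from rfl, Complex.normSq_mk, sq2]
  ring

/-- **Sharp Poincaré–Wirtinger inequality** for null-average `2π`-periodic
`ℝ²`-valued functions, with characterization of the equality case. -/
theorem poincare_wirtinger_sharp
    (u : ℝ → Fin 2 → ℝ)
    (hu : ContDiff ℝ 1 u)
    (hper : ∀ t : ℝ, u (t + 2 * π) = u t)
    (havg : (∫ t in (-π)..π, u t) = 0) :
    (∫ t in (-π)..π, sq2 (u t)) ≤ (∫ t in (-π)..π, sq2 (deriv u t)) ∧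
    ((∫ t in (-π)..π, sq2 (u t)) = (∫ t in (-π)..π, sq2 (deriv u t)) ↔
      ∃ c₁ c₂ : Fin 2 → ℝ, ∀ t : ℝ,
        u t = fun i => c₁ i * Real.cos t + c₂ i * Real.sin t) := by
  have hcos_sin : ∀ (c₁ c₂ : Fin 2 → ℝ) t,
      (fun i => c₁ i * Real.cos t + c₂ i * Real.sin t) = cos t • c₁ + sin t • c₂ := by
    intro c₁ c₂ t; ext i; simp [mul_comm]
  have hderiv : ∀ t,
      deriv (fun s => finTwoEquivComplex (u s)) t = finTwoEquivComplex (deriv u t) := fun t =>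
    (finTwoEquivComplex.hasFDerivAt.comp_hasDerivAt t
      (hu.differentiable one_ne_zero t).hasDerivAt).deriv
  have havg' : ∫ t in (-π)..π, finTwoEquivComplex (u t) = 0 := by
    have := (finTwoEquivComplex : (Fin 2 → ℝ) →L[ℝ] ℂ).intervalIntegral_comp_comm
      (hu.continuous.intervalIntegrable (μ := volume) (-π) π)
    simpa [havg] using this
  obtain ⟨hle, hrigid⟩ := wirtinger_inequality_complex (f := fun t => finTwoEquivComplex (u t))
    (finTwoEquivComplex.contDiff.comp hu) (fun t => by simp only [hper t]) havg'
  simp only [hderiv, ← sq2_eq_norm_finTwoEquivComplex_sq] at hle hrigid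
  refine ⟨hle, fun heq => ?_, fun ⟨c₁, c₂, hc⟩ => ?_⟩
  · obtain ⟨c₁, c₂, hc⟩ := hrigid heq
    refine ⟨finTwoEquivComplex.symm c₁, finTwoEquivComplex.symm c₂, fun t => ?_⟩
    rw [hcos_sin, ← finTwoEquivComplex.symm_apply_apply (u t), hc t, map_add, map_smul, map_smul]
  · obtain rfl : u = fun t => cos t • c₁ + sin t • c₂ := funext fun t => (hc t).trans (hcos_sin ..)
    exact (integral_comp_deriv_cos_smul_add_sin_smul c₁ c₂ sq2).symm
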